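/- Let f: {0,1}ⁿ → {0,1} be a Boolean function with vanishing linear structure, meaning for every nonzero γ ∈ {0,1}ⁿ there exists β with f(β) ≠ f(β⊕γ). Let P be a Hermitian Pauli on 3n qubits that anticommutes with Z_k for some k in the first block {1,…,n}, and let γ ∈ {0,1}ⁿ record which of Z₁,…,Z_n anticommute with P. Then there exist β₀ with f(β₀)=0 and β₁ = β₀⊕γ with f(β₁)=1 and α, α', β₁' such that |⟨β₁|_z⟨β₀|_z⟨α|_x · P · |β₀⟩_z|α⟩_x|β₁⟩_z| = 2^{−n}, where |β⟩_z is the computational basis state and |α⟩_x = (⊗ᵢ Z^{αᵢ})|+⟩^⊗n. -/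

import Mathlib

open Matrix Complex

noncomputable section

abbrev Qb := Fin 2

def PX : Matrix Qb Qb ℂ := !![0, 1; 1, 0]
def PY : Matrix Qb Qb ℂ := !![0, -Complex.I; Complex.I, 0]
def PZ : Matrix Qb Qb ℂ := !![1, 0; 0, -1]

def PauliSet : Set (Matrix Qb Qb ℂ) := {1, PX, PY, PZ}

/-- 3n qubits: three blocks of n qubits each. -/
abbrev Idx (n : ℕ) := Fin n ⊕ (Fin n ⊕ Fin n)

/-- Tensor product of single-qubit operators over an index type. -/
def prodPauliI {ι : Type} [Fintype ι] (Ps : ι → Matrix Qb Qb ℂ) :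
    Matrix (ι → Fin 2) (ι → Fin 2) ℂ :=
  fun v w => ∏ i, Ps i (v i) (w i)

/-- Single-qubit operator `A` on qubit `j`, identity elsewhere. -/
def singleOpI {ι : Type} [Fintype ι] [DecidableEq ι] (j : ι)
    (A : Matrix Qb Qb ℂ) : Matrix (ι → Fin 2) (ι → Fin 2) ℂ :=
  prodPauliI (fun i => if i = j then A else 1)

/-- Membership in the Pauli group on qubits indexed by `ι`. -/
def IsPauliI {ι : Type} [Fintype ι] (P : Matrix (ι → Fin 2) (ι → Fin 2) ℂ) : Prop :=
  ∃ (c : ℂ) (Ps : ι → Matrix Qb Qb ℂ),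
    (c = 1 ∨ c = -1 ∨ c = Complex.I ∨ c = -Complex.I) ∧
    (∀ i, Ps i ∈ PauliSet) ∧ P = c • prodPauliI Ps

/-- Inner product ⟨v|w⟩. -/
def innerI {ι : Type} [Fintype ι] [DecidableEq ι] (v w : (ι → Fin 2) → ℂ) : ℂ :=
  ∑ x, star (v x) * w x

/-- The `n`-qubit computational (Z-)basis state `|β⟩_z`. -/
def zState {n : ℕ} (β : Fin n → Fin 2) : (Fin n → Fin 2) → ℂ :=
  fun v => if v = β then 1 else 0

/-- The `n`-qubit X-basis state `|α⟩_x = (⊗ᵢ Z^{αᵢ})|+⟩^⊗n`, with amplitudes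
`2^{-n/2}(−1)^{α·v}`. -/
def xState {n : ℕ} (α : Fin n → Fin 2) : (Fin n → Fin 2) → ℂ :=
  fun v => (((Real.sqrt 2) ^ n : ℝ) : ℂ)⁻¹ *
    ∏ i, (if α i = 1 ∧ v i = 1 then (-1 : ℂ) else 1)

/-- Tensor product of three `n`-qubit states, as a `3n`-qubit state. -/
def tri {n : ℕ} (f g h : (Fin n → Fin 2) → ℂ) : (Idx n → Fin 2) → ℂ :=
  fun v => f (fun i => v (Sum.inl i)) * g (fun i => v (Sum.inr (Sum.inl i)))
    * h (fun i => v (Sum.inr (Sum.inr i)))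

lemma sum_prod_fun {ι : Type} [Fintype ι] [DecidableEq ι] (g : ι → Fin 2 → ℂ) :
    ∑ x : ι → Fin 2, ∏ i, g i (x i) = ∏ i, ∑ a, g i a := by
  rw [Finset.prod_univ_sum, Fintype.piFinset_univ]

lemma prodPauli_mul {ι : Type} [Fintype ι] [DecidableEq ι] (Ps Qs : ι → Matrix Qb Qb ℂ) :
    prodPauliI Ps * prodPauliI Qs = prodPauliI (fun i => Ps i * Qs i) := by
  ext v w
  simp only [Matrix.mul_apply, prodPauliI]
  rw [← sum_prod_fun (fun i a => Ps i (v i) a * Qs i a (w i))]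
  congr 1; ext u; rw [← Finset.prod_mul_distrib]

lemma pauli_nonzero {A : Matrix Qb Qb ℂ} (hA : A ∈ PauliSet) : ∃ a b, A a b ≠ 0 := by
  rcases hA with rfl | rfl | rfl | rfl
  · exact ⟨0, 0, by norm_num⟩
  · exact ⟨0, 1, by norm_num [PX]⟩
  · exact ⟨1, 0, by norm_num [PY, Complex.I_ne_zero]⟩
  · exact ⟨0, 0, by norm_num [PZ]⟩

lemma prodPauli_ne_zero {ι : Type} [Fintype ι] {Qs : ι → Matrix Qb Qb ℂ}
    (h : ∀ i, Qs i ∈ PauliSet) : ∃ v w, prodPauliI Qs v w ≠ 0 := by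
  choose a b hab using fun i => pauli_nonzero (h i)
  exact ⟨a, b, Finset.prod_ne_zero_iff.2 fun i _ => hab i⟩

-- single-qubit algebra facts
lemma PZ_mul_PZ : PZ * PZ = 1 := by
  ext i j; fin_cases i <;> fin_cases j <;> simp [PZ, Matrix.mul_apply, Fin.sum_univ_two]

lemma PX_anticomm : PX * PZ = -(PZ * PX) := by
  ext i j; fin_cases i <;> fin_cases j <;> simp [PX, PZ, Matrix.mul_apply, Fin.sum_univ_two]

lemma PY_anticomm : PY * PZ = -(PZ * PY) := by
  ext i j; fin_cases i <;> fin_cases j <;> simp [PY, PZ, Matrix.mul_apply, Fin.sum_univ_two]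

-- negate one factor
lemma prodPauli_neg_factor {ι : Type} [Fintype ι] [DecidableEq ι]
    (Qs Rs : ι → Matrix Qb Qb ℂ) (j : ι) (hj : Qs j = -(Rs j))
    (hne : ∀ i, i ≠ j → Qs i = Rs i) :
    prodPauliI Qs = -(prodPauliI Rs) := by
  ext v w
  simp only [prodPauliI, Matrix.neg_apply]
  rw [← Finset.prod_erase_mul _ _ (Finset.mem_univ j),
      ← Finset.prod_erase_mul _ _ (Finset.mem_univ j)]
  rw [Finset.prod_congr rfl (fun i hi => by rw [hne i (Finset.ne_of_mem_erase hi)])]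
  rw [hj]; simp

lemma pauli_isUnit {A : Matrix Qb Qb ℂ} (hA : A ∈ PauliSet) : IsUnit A := by
  rw [Matrix.isUnit_iff_isUnit_det, isUnit_iff_ne_zero]
  rcases hA with rfl | rfl | rfl | rfl <;>
    simp [PX, PY, PZ, Matrix.det_fin_two] <;>
    first
      | norm_num [Complex.I_ne_zero]
      | (intro h; have := congrArg (· ^ 2) h; simp [Complex.I_sq] at this; norm_num at this)

lemma isUnit_nonzero {A : Matrix Qb Qb ℂ} (hA : IsUnit A) : ∃ a b, A a b ≠ 0 := by
  by_contra h
  push_neg at h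
  have : A = 0 := by ext a b; exact h a b
  rw [this] at hA
  exact (not_isUnit_zero (M₀ := Matrix Qb Qb ℂ)) hA

lemma comm_of_IZ {ι : Type} [Fintype ι] [DecidableEq ι] (c : ℂ)
    (Ps : ι → Matrix Qb Qb ℂ) (j : ι) (h : Ps j = 1 ∨ Ps j = PZ) :
    (c • prodPauliI Ps) * singleOpI j PZ = singleOpI j PZ * (c • prodPauliI Ps) := by
  unfold singleOpI
  rw [smul_mul_assoc, mul_smul_comm, prodPauli_mul, prodPauli_mul]
  have : (fun i => Ps i * if i = j then PZ else 1)
      = fun i => (if i = j then PZ else 1) * Ps i := by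
    funext i
    by_cases hij : i = j
    · subst hij
      rcases h with h | h <;> rw [h] <;> simp [PZ_mul_PZ]
    · simp [hij]
  rw [this]

lemma anticomm_of_XY {ι : Type} [Fintype ι] [DecidableEq ι] (c : ℂ)
    (Ps : ι → Matrix Qb Qb ℂ) (j : ι) (h : Ps j = PX ∨ Ps j = PY) :
    (c • prodPauliI Ps) * singleOpI j PZ = -(singleOpI j PZ * (c • prodPauliI Ps)) := by
  unfold singleOpI
  rw [smul_mul_assoc, mul_smul_comm, prodPauli_mul, prodPauli_mul, ← smul_neg]
  congr 1
  apply prodPauli_neg_factor _ _ j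
  · simp only [if_pos rfl]
    rcases h with h | h <;> rw [h]
    · exact PX_anticomm
    · exact PY_anticomm
  · intro i hi
    simp [hi]

lemma not_both {ι : Type} [Fintype ι] [DecidableEq ι] {c : ℂ} (hc0 : c ≠ 0)
    {Ps : ι → Matrix Qb Qb ℂ} (hPs : ∀ i, Ps i ∈ PauliSet) (j : ι)
    (hcomm : (c • prodPauliI Ps) * singleOpI j PZ = singleOpI j PZ * (c • prodPauliI Ps))
    (hanti : (c • prodPauliI Ps) * singleOpI j PZ = -(singleOpI j PZ * (c • prodPauliI Ps))) :
    False := by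
  have h2 := hcomm.symm.trans hanti
  have hform : singleOpI j PZ * (c • prodPauliI Ps)
      = c • prodPauliI (fun i => (if i = j then PZ else 1) * Ps i) := by
    unfold singleOpI
    rw [mul_smul_comm, prodPauli_mul]
  have hQs : ∀ i, IsUnit ((if i = j then PZ else 1) * Ps i) := by
    intro i
    refine IsUnit.mul ?_ (pauli_isUnit (hPs i))
    by_cases hij : i = j <;> simp [hij]
    exact pauli_isUnit (by right; right; right; rfl)
  choose a b hab using fun i => isUnit_nonzero (hQs i)
  have hvw : prodPauliI (fun i => (if i = j then PZ else 1) * Ps i) a b ≠ 0 :=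
    Finset.prod_ne_zero_iff.2 fun i _ => hab i
  rw [hform] at h2
  have := congrFun (congrFun h2 a) b
  simp only [Matrix.smul_apply, Matrix.neg_apply, smul_eq_mul] at this
  have h0 : (2 : ℂ) * (c * prodPauliI (fun i => (if i = j then PZ else 1) * Ps i) a b) = 0 := by
    linear_combination this
  rcases mul_eq_zero.mp h0 with h | h
  · norm_num at h
  · rcases mul_eq_zero.mp h with h | h
    · exact hc0 h
    · exact hvw h


lemma xState_zero {n : ℕ} (v : Fin n → Fin 2) :
    xState 0 v = (((Real.sqrt 2) ^ n : ℝ) : ℂ)⁻¹ := by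
  simp [xState]

lemma zState_prod {n : ℕ} (β v : Fin n → Fin 2) :
    zState β v = ∏ i, (if v i = β i then (1:ℂ) else 0) := by
  rw [zState, Finset.prod_boole]
  simp [funext_iff]

lemma star_zState {n : ℕ} (β v : Fin n → Fin 2) : star (zState β v) = zState β v := by
  unfold zState; split_ifs <;> simp

/-- the per-qubit factor -/
def gfun {n : ℕ} (Ps : Idx n → Matrix Qb Qb ℂ) (β₀ β₁ : Fin n → Fin 2) :
    Idx n → Fin 2 → Fin 2 → ℂ
  | Sum.inl i => fun a b => (if a = β₁ i then 1 else 0) *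
      (Ps (Sum.inl i) a b * (if b = β₀ i then 1 else 0))
  | Sum.inr (Sum.inl i) => fun a b => (if a = β₀ i then 1 else 0) * Ps (Sum.inr (Sum.inl i)) a b
  | Sum.inr (Sum.inr i) => fun a b => Ps (Sum.inr (Sum.inr i)) a b * (if b = β₁ i then 1 else 0)

lemma main_calc {n : ℕ} (Ps : Idx n → Matrix Qb Qb ℂ) (β₀ β₁ : Fin n → Fin 2) :
    innerI (tri (zState β₁) (zState β₀) (xState 0))
      ((prodPauliI Ps).mulVec (tri (zState β₀) (xState 0) (zState β₁)))
    = ((((2:ℝ)^n)⁻¹ : ℝ) : ℂ) *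
        ∏ i : Idx n, (∑ a : Fin 2, ∑ b : Fin 2, gfun Ps β₀ β₁ i a b) := by
  set K : ℂ := (((Real.sqrt 2) ^ n : ℝ) : ℂ)⁻¹ with hK
  have hstarK : star K = K := by
    rw [hK]
    simp [Complex.star_def, map_inv₀, Complex.conj_ofReal]
  have claimA : ∀ x y : Idx n → Fin 2,
      star (tri (zState β₁) (zState β₀) (xState 0) x) *
        (prodPauliI Ps x y * tri (zState β₀) (xState 0) (zState β₁) y)
      = (K * K) * ∏ i : Idx n, gfun Ps β₀ β₁ i (x i) (y i) := by
    intro x y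
    have hsplitP : prodPauliI Ps x y
        = (∏ i, Ps (Sum.inl i) (x (Sum.inl i)) (y (Sum.inl i))) *
          ((∏ i, Ps (Sum.inr (Sum.inl i)) (x (Sum.inr (Sum.inl i))) (y (Sum.inr (Sum.inl i)))) *
           (∏ i, Ps (Sum.inr (Sum.inr i)) (x (Sum.inr (Sum.inr i))) (y (Sum.inr (Sum.inr i))))) := by
      rw [prodPauliI, Fintype.prod_sum_type, Fintype.prod_sum_type]
    have hsplitG : ∏ i : Idx n, gfun Ps β₀ β₁ i (x i) (y i)
        = (∏ i, gfun Ps β₀ β₁ (Sum.inl i) (x (Sum.inl i)) (y (Sum.inl i))) *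
          ((∏ i, gfun Ps β₀ β₁ (Sum.inr (Sum.inl i)) (x (Sum.inr (Sum.inl i))) (y (Sum.inr (Sum.inl i)))) *
           (∏ i, gfun Ps β₀ β₁ (Sum.inr (Sum.inr i)) (x (Sum.inr (Sum.inr i))) (y (Sum.inr (Sum.inr i))))) := by
      rw [Fintype.prod_sum_type, Fintype.prod_sum_type]
    rw [hsplitG]
    simp only [gfun]
    rw [Finset.prod_mul_distrib, Finset.prod_mul_distrib, Finset.prod_mul_distrib,
        Finset.prod_mul_distrib]
    rw [tri, tri, xState_zero, xState_zero, hsplitP]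
    rw [star_mul', star_mul', hstarK, star_zState, star_zState]
    rw [zState_prod β₁ (fun i => x (Sum.inl i)), zState_prod β₀ (fun i => x (Sum.inr (Sum.inl i))),
        zState_prod β₀ (fun i => y (Sum.inl i)), zState_prod β₁ (fun i => y (Sum.inr (Sum.inr i)))]
    ring
  have hmv : ∀ x, (prodPauliI Ps).mulVec (tri (zState β₀) (xState 0) (zState β₁)) x
      = ∑ y, prodPauliI Ps x y * tri (zState β₀) (xState 0) (zState β₁) y := by
    intro x; simp [Matrix.mulVec, dotProduct]
  rw [innerI]
  calc ∑ x, star (tri (zState β₁) (zState β₀) (xState 0) x) *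
        (prodPauliI Ps).mulVec (tri (zState β₀) (xState 0) (zState β₁)) x
      = ∑ x : Idx n → Fin 2, ∑ y : Idx n → Fin 2, (K * K) * ∏ i : Idx n, gfun Ps β₀ β₁ i (x i) (y i) := by
        refine Finset.sum_congr rfl fun x _ => ?_
        rw [hmv, Finset.mul_sum]
        exact Finset.sum_congr rfl fun y _ => claimA x y
    _ = (K * K) * ∑ x : Idx n → Fin 2, ∑ y : Idx n → Fin 2, ∏ i : Idx n, gfun Ps β₀ β₁ i (x i) (y i) := by
        rw [Finset.mul_sum]
        exact Finset.sum_congr rfl fun x _ => by rw [Finset.mul_sum]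
    _ = (K * K) * ∏ i : Idx n, (∑ a : Fin 2, ∑ b : Fin 2, gfun Ps β₀ β₁ i a b) := by
        congr 1
        calc ∑ x : Idx n → Fin 2, ∑ y : Idx n → Fin 2, ∏ i : Idx n, gfun Ps β₀ β₁ i (x i) (y i)
            = ∑ x : Idx n → Fin 2, ∏ i, ∑ b, gfun Ps β₀ β₁ i (x i) b := by
              exact Finset.sum_congr rfl fun x _ =>
                sum_prod_fun (fun i b => gfun Ps β₀ β₁ i (x i) b)
          _ = ∏ i : Idx n, ∑ a, ∑ b, gfun Ps β₀ β₁ i a b :=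
              sum_prod_fun (fun i a => ∑ b, gfun Ps β₀ β₁ i a b)
    _ = ((((2:ℝ)^n)⁻¹ : ℝ) : ℂ) * ∏ i : Idx n, (∑ a : Fin 2, ∑ b : Fin 2, gfun Ps β₀ β₁ i a b) := by
        congr 1
        rw [hK, ← Complex.ofReal_inv, ← Complex.ofReal_mul]
        congr 1
        rw [← mul_inv, ← mul_pow, Real.mul_self_sqrt (by norm_num : (0:ℝ) ≤ 2)]

lemma sum_g1 (A : Matrix Qb Qb ℂ) (p q : Fin 2) :
    ∑ a : Fin 2, ∑ b : Fin 2, (if a = p then (1:ℂ) else 0) * (A a b * (if b = q then 1 else 0))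
      = A p q := by
  fin_cases p <;> fin_cases q <;> simp [Fin.sum_univ_two]

lemma sum_g2 (A : Matrix Qb Qb ℂ) (p : Fin 2) :
    ∑ a : Fin 2, ∑ b : Fin 2, (if a = p then (1:ℂ) else 0) * A a b = ∑ b, A p b := by
  fin_cases p <;> simp [Fin.sum_univ_two]

lemma sum_g3 (A : Matrix Qb Qb ℂ) (q : Fin 2) :
    ∑ a : Fin 2, ∑ b : Fin 2, A a b * (if b = q then (1:ℂ) else 0) = ∑ a, A a q := by
  fin_cases q <;> simp [Fin.sum_univ_two]

lemma abs_entry_diag {A : Matrix Qb Qb ℂ} (hA : A = 1 ∨ A = PZ) (b : Fin 2) :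
    ‖A b b‖ = 1 := by
  rcases hA with rfl | rfl <;> fin_cases b <;>
    simp [PZ, Matrix.one_fin_two]

lemma abs_entry_off {A : Matrix Qb Qb ℂ} (hA : A = PX ∨ A = PY) (b : Fin 2) :
    ‖A (b + 1) b‖ = 1 := by
  rcases hA with rfl | rfl <;> fin_cases b <;>
    simp [PX, PY]

lemma abs_rowsum {A : Matrix Qb Qb ℂ} (hA : A ∈ PauliSet) (p : Fin 2) :
    ‖∑ b, A p b‖ = 1 := by
  rcases hA with rfl | rfl | rfl | rfl <;> fin_cases p <;>
    simp [PX, PY, PZ, Matrix.one_fin_two, Fin.sum_univ_two]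

lemma abs_colsum {A : Matrix Qb Qb ℂ} (hA : A ∈ PauliSet) (q : Fin 2) :
    ‖∑ a, A a q‖ = 1 := by
  rcases hA with rfl | rfl | rfl | rfl <;> fin_cases q <;>
    simp [PX, PY, PZ, Matrix.one_fin_two, Fin.sum_univ_two]

lemma fin2_cases (a : Fin 2) : a = 0 ∨ a = 1 := by omega


/-- for a Boolean function `f` with vanishing linear structure and
a Hermitian Pauli `P` on 3n qubits anticommuting with some `Z_k` in the first
block, with `γ` recording which of `Z₁,…,Z_n` anticommute with `P`, there are
`β₀` with `f(β₀)=0`, `β₁ = β₀⊕γ` with `f(β₁)=1`, and `α` such that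
`|⟨β₁|_z⟨β₀|_z⟨α|_x P |β₀⟩_z|α⟩_x|β₁⟩_z| = 2^{−n}`. -/
theorem stmt16 (n : ℕ) (f : (Fin n → Fin 2) → Fin 2)
    (hf : ∀ γ : Fin n → Fin 2, γ ≠ 0 → ∃ β, f (β + γ) ≠ f β)
    (P : Matrix (Idx n → Fin 2) (Idx n → Fin 2) ℂ)
    (hP : IsPauliI P) (hHerm : P.IsHermitian)
    (γ : Fin n → Fin 2)
    (hγ : ∀ i : Fin n, γ i = 1 ↔
      P * singleOpI (Sum.inl i) PZ = -(singleOpI (Sum.inl i) PZ * P))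
    (hk : ∃ k : Fin n, γ k = 1) :
    ∃ (β₀ α : Fin n → Fin 2), f β₀ = 0 ∧ f (β₀ + γ) = 1 ∧
      ‖(innerI (tri (zState (β₀ + γ)) (zState β₀) (xState α))
          (P.mulVec (tri (zState β₀) (xState α) (zState (β₀ + γ)))))‖
        = (((2 : ℝ) ^ n)⁻¹ : ℝ) := by
  obtain ⟨c, Ps, hc, hPs, rfl⟩ := hP
  have hc0 : c ≠ 0 := by
    rcases hc with rfl | rfl | rfl | rfl <;> norm_num [Complex.I_ne_zero]
  have habsc : ‖c‖ = 1 := by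
    rcases hc with rfl | rfl | rfl | rfl <;> simp
  have hchar : ∀ i : Fin n,
      (γ i = 0 ∧ (Ps (Sum.inl i) = 1 ∨ Ps (Sum.inl i) = PZ)) ∨
      (γ i = 1 ∧ (Ps (Sum.inl i) = PX ∨ Ps (Sum.inl i) = PY)) := by
    intro i
    have hIZ : (Ps (Sum.inl i) = 1 ∨ Ps (Sum.inl i) = PZ) → γ i = 0 := by
      intro h
      rcases fin2_cases (γ i) with h0 | h1
      · exact h0
      · exact absurd ((hγ i).mp h1)
          (fun hanti => not_both hc0 hPs (Sum.inl i) (comm_of_IZ c Ps _ h) hanti)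
    rcases hPs (Sum.inl i) with h | h | h | h
    · exact Or.inl ⟨hIZ (Or.inl h), Or.inl h⟩
    · exact Or.inr ⟨(hγ i).mpr (anticomm_of_XY c Ps _ (Or.inl h)), Or.inl h⟩
    · exact Or.inr ⟨(hγ i).mpr (anticomm_of_XY c Ps _ (Or.inr h)), Or.inr h⟩
    · exact Or.inl ⟨hIZ (Or.inr h), Or.inr h⟩
  obtain ⟨k, hk⟩ := hk
  have hγne : γ ≠ 0 := by
    intro h
    rw [h] at hk
    simp at hk
  obtain ⟨β, hβ⟩ := hf γ hγne
  obtain ⟨β₀, hb0, hb1⟩ : ∃ β₀, f β₀ = 0 ∧ f (β₀ + γ) = 1 := by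
    rcases fin2_cases (f β) with h | h
    · refine ⟨β, h, ?_⟩
      rcases fin2_cases (f (β + γ)) with h' | h'
      · exact absurd (h'.trans h.symm) hβ
      · exact h'
    · refine ⟨β + γ, ?_, ?_⟩
      · rcases fin2_cases (f (β + γ)) with h' | h'
        · exact h'
        · exact absurd (h'.trans h.symm) hβ
      · have hadd : β + γ + γ = β := by
          funext j
          show β j + γ j + γ j = β j
          rcases fin2_cases (γ j) with h2 | h2 <;> rw [h2] <;>
            rcases fin2_cases (β j) with h3 | h3 <;> rw [h3] <;> decide
        rw [hadd, h]
  refine ⟨β₀, 0, hb0, hb1, ?_⟩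
  rw [Matrix.smul_mulVec]
  have hsmul : innerI (tri (zState (β₀ + γ)) (zState β₀) (xState 0))
      (c • (prodPauliI Ps).mulVec (tri (zState β₀) (xState 0) (zState (β₀ + γ))))
      = c * innerI (tri (zState (β₀ + γ)) (zState β₀) (xState 0))
      ((prodPauliI Ps).mulVec (tri (zState β₀) (xState 0) (zState (β₀ + γ)))) := by
    unfold innerI
    rw [Finset.mul_sum]
    exact Finset.sum_congr rfl fun x _ => by
      simp only [Pi.smul_apply, smul_eq_mul]; ring
  rw [hsmul, norm_mul, habsc, one_mul, main_calc Ps β₀ (β₀ + γ), norm_mul, norm_prod]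
  have habs1 : ∀ i : Idx n, ‖(∑ a : Fin 2, ∑ b : Fin 2,
      gfun Ps β₀ (β₀ + γ) i a b)‖ = 1 := by
    intro i
    rcases i with i | i | i
    · have : ∑ a : Fin 2, ∑ b : Fin 2, gfun Ps β₀ (β₀ + γ) (Sum.inl i) a b
          = Ps (Sum.inl i) ((β₀ + γ) i) (β₀ i) := sum_g1 _ _ _
      rw [this]
      have hadd : (β₀ + γ) i = β₀ i + γ i := rfl
      rcases hchar i with ⟨h0, hA⟩ | ⟨h1, hA⟩
      · rw [hadd, h0, add_zero]
        exact abs_entry_diag hA _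
      · rw [hadd, h1]
        exact abs_entry_off hA _
    · rw [show ∑ a : Fin 2, ∑ b : Fin 2, gfun Ps β₀ (β₀ + γ) (Sum.inr (Sum.inl i)) a b
          = ∑ b, Ps (Sum.inr (Sum.inl i)) (β₀ i) b from sum_g2 _ _]
      exact abs_rowsum (hPs _) _
    · rw [show ∑ a : Fin 2, ∑ b : Fin 2, gfun Ps β₀ (β₀ + γ) (Sum.inr (Sum.inr i)) a b
          = ∑ a, Ps (Sum.inr (Sum.inr i)) a ((β₀ + γ) i) from sum_g3 _ _]
      exact abs_colsum (hPs _) _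
  rw [Finset.prod_congr rfl (fun i _ => habs1 i), Finset.prod_const_one, mul_one,
      Complex.norm_real, Real.norm_eq_abs, _root_.abs_of_nonneg (by positivity)]
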